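/- arXiv:1611.05073 — 2 statements merged into one kernel-verified Lean document; each statement's English description precedes it below -/
import Mathlib

section
/- Let P ∈ ℝ^{q²} with ‖P‖ < ε, let σ > 0 satisfy σq < ε, and let ξ, ξ' be independent ℝ^{q²}-valued random vectors with i.i.d. N(0,1) coordinates. Then Pr(‖P + σ(ξ − ξ')‖ < 2ε) > (1 + 8σ²(ε² + σ²q²)/(3ε² − 2σ²q²)²)^{-1}. -/
open MeasureTheory ProbabilityTheory
open scoped NNReal

/-!
Each coordinate `X a = P a + σ (ξ a - ξ' a)` is Gaussian with mean `P a` and variance `2σ²`, and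
distinct coordinates are independent, so `S = ∑ a, (X a)²` has mean `‖P‖² + 2σ²q²` and variance
`8σ²‖P‖² + 8σ⁴q²`; the fourth Gaussian moment behind the variance is the fourth derivative at `0`
of the moment generating function `t ↦ exp (μt + vt²/2)`. Cantelli's one-sided Chebyshev inequality
with `t = 4ε² - 𝔼 S` gives `Pr(S < 4ε²) ≥ (1 + Var S / t²)⁻¹`, and `‖P‖ < ε`, `σq < ε` give
`t > 3ε² - 2σ²q² > 0` and `Var S < 8σ²(ε² + σ²q²)`.
-/

lemma inv_one_add_div_sq_lt_sq_div_add_sq {B d V t : ℝ} (hd : 0 < d) (hdt : d < t)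
    (hV : 0 ≤ V) (hVB : V < B) : (1 + B / d ^ 2)⁻¹ < t ^ 2 / (V + t ^ 2) := by
  have ht : 0 < t := hd.trans hdt
  have hBd : V / t ^ 2 < B / d ^ 2 :=
    (div_lt_div_of_pos_right hVB (by positivity)).trans_le
      (div_le_div_of_nonneg_left (by linarith) (by positivity) (by nlinarith))
  calc (1 + B / d ^ 2)⁻¹ < (1 + V / t ^ 2)⁻¹ := by gcongr
    _ = t ^ 2 / (V + t ^ 2) := by field_simp; ring

lemma deriv_mul_exp_quadratic {p p' : ℝ → ℝ} (m v : ℝ) (hp : ∀ t, HasDerivAt p (p' t) t) :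
    deriv (fun t ↦ p t * Real.exp (m * t + v * t ^ 2 / 2))
      = fun t ↦ (p' t + (m + v * t) * p t) * Real.exp (m * t + v * t ^ 2 / 2) := by
  ext t
  have hq : HasDerivAt (fun t ↦ m * t + v * t ^ 2 / 2) (m + v * t) t := by
    have := ((hasDerivAt_id t).const_mul m).add (((hasDerivAt_pow 2 t).const_mul v).div_const 2)
    exact this.congr_deriv (by simp only [Nat.cast_ofNat, Nat.add_one_sub_one, pow_one]; ring)
  exact ((hp t).mul hq.exp).deriv.trans (by ring)

lemma iteratedDeriv_exp_quadratic (m v : ℝ) :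
    iteratedDeriv 2 (fun t ↦ Real.exp (m * t + v * t ^ 2 / 2)) 0 = m ^ 2 + v ∧
    iteratedDeriv 4 (fun t ↦ Real.exp (m * t + v * t ^ 2 / 2)) 0
      = m ^ 4 + 6 * m ^ 2 * v + 3 * v ^ 2 := by
  set g := fun t ↦ Real.exp (m * t + v * t ^ 2 / 2)
  have hs (t : ℝ) : HasDerivAt (fun t ↦ m + v * t) v t := by
    simpa using ((hasDerivAt_id t).const_mul v).const_add m
  have h1 : deriv g = fun t ↦ (m + v * t) * g t := by
    simpa using deriv_mul_exp_quadratic (p := fun _ ↦ 1) m v (fun t ↦ hasDerivAt_const t 1)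
  have h2 : deriv (fun t ↦ (m + v * t) * g t) = fun t ↦ ((m + v * t) ^ 2 + v) * g t :=
    (deriv_mul_exp_quadratic m v hs).trans (by ext; ring)
  have h3 : deriv (fun t ↦ ((m + v * t) ^ 2 + v) * g t)
      = fun t ↦ ((m + v * t) ^ 3 + 3 * v * (m + v * t)) * g t :=
    (deriv_mul_exp_quadratic m v fun t ↦ ((hs t).pow 2).add_const v).trans
      (by ext; simp only [Nat.cast_ofNat, Nat.add_one_sub_one, pow_one, Pi.pow_apply]; ring)
  have h4 : deriv (fun t ↦ ((m + v * t) ^ 3 + 3 * v * (m + v * t)) * g t)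
      = fun t ↦ ((m + v * t) ^ 4 + 6 * v * (m + v * t) ^ 2 + 3 * v ^ 2) * g t :=
    (deriv_mul_exp_quadratic m v fun t ↦ ((hs t).pow 3).add ((hs t).const_mul (3 * v))).trans
      (by ext; simp only [Nat.cast_ofNat, Nat.add_one_sub_one, Pi.add_apply, Pi.pow_apply]; ring)
  simp only [iteratedDeriv_succ, iteratedDeriv_zero, h1, h2, h3, h4]
  simp only [g, mul_zero, add_zero, ne_eq, OfNat.ofNat_ne_zero, not_false_eq_true, zero_pow,
    zero_div, Real.exp_zero, mul_one]
  exact ⟨trivial, by ring⟩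

namespace ProbabilityTheory

variable {μ : ℝ} {v : ℝ≥0}

lemma integral_pow_gaussianReal_eq_iteratedDeriv (n : ℕ) :
    ∫ x, x ^ n ∂gaussianReal μ v
      = iteratedDeriv n (fun t ↦ Real.exp (μ * t + v * t ^ 2 / 2)) 0 := by
  rw [← mgf_fun_id_gaussianReal, iteratedDeriv_mgf_zero (by simp)]
  rfl

lemma integral_sq_gaussianReal : ∫ x, x ^ 2 ∂gaussianReal μ v = μ ^ 2 + v := by
  rw [integral_pow_gaussianReal_eq_iteratedDeriv, (iteratedDeriv_exp_quadratic μ v).1]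

lemma integral_pow_four_gaussianReal :
    ∫ x, x ^ 4 ∂gaussianReal μ v = μ ^ 4 + 6 * μ ^ 2 * v + 3 * v ^ 2 := by
  rw [integral_pow_gaussianReal_eq_iteratedDeriv, (iteratedDeriv_exp_quadratic μ v).2]

lemma memLp_sq_gaussianReal : MemLp (fun x ↦ x ^ 2) 2 (gaussianReal μ v) := by
  refine (memLp_two_iff_integrable_sq (by fun_prop)).2 ?_
  simpa [← pow_mul, Even.pow_abs ⟨2, rfl⟩] using
    (memLp_id_gaussianReal (μ := μ) (v := v) 4).integrable_norm_pow (by norm_num)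

lemma variance_sq_gaussianReal :
    Var[fun x ↦ x ^ 2; gaussianReal μ v] = 4 * μ ^ 2 * v + 2 * v ^ 2 := by
  rw [variance_eq_sub memLp_sq_gaussianReal]
  simp only [Pi.pow_apply, ← pow_mul, integral_sq_gaussianReal, integral_pow_four_gaussianReal]
  ring

variable {Ω : Type*} {mΩ : MeasurableSpace Ω} {P : Measure Ω}

lemma measureReal_ge_integral_add_le [IsProbabilityMeasure P] {X : Ω → ℝ} (hX : MemLp X 2 P)
    {t : ℝ} (ht : 0 < t) : P.real {ω | P[X] + t ≤ X ω} ≤ Var[X; P] / (Var[X; P] + t ^ 2) := by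
  set m := P[X]
  set V := Var[X; P]
  have hV : 0 ≤ V := variance_nonneg X P
  -- Markov's inequality for `(X - m + u)²`; the shift `u = V / t` optimises the resulting bound.
  set u := V / t
  have hu : 0 ≤ u := div_nonneg hV ht.le
  set Y := fun ω ↦ X ω + (u - m)
  have hY : MemLp Y 2 P := hX.add (memLp_const _)
  have hYsq : P[Y ^ 2] = V + u ^ 2 := by
    have hYmean : P[Y] = u := by
      simp [Y, integral_add (hX.integrable one_le_two) (integrable_const _), m]
    have := variance_eq_sub hY
    rw [variance_add_const hX.aestronglyMeasurable, hYmean] at this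
    linarith
  have hsub : {ω | m + t ≤ X ω} ⊆ {ω | (t + u) ^ 2 ≤ Y ω ^ 2} := fun ω (hω : m + t ≤ X ω) ↦
    show (t + u) ^ 2 ≤ (X ω + (u - m)) ^ 2 from pow_le_pow_left₀ (by linarith) (by linarith) 2
  have hmarkov := mul_meas_ge_le_integral_of_nonneg (ae_of_all _ fun ω ↦ sq_nonneg (Y ω))
    hY.integrable_sq ((t + u) ^ 2)
  calc P.real {ω | m + t ≤ X ω} ≤ P.real {ω | (t + u) ^ 2 ≤ Y ω ^ 2} := measureReal_mono hsub
    _ ≤ (V + u ^ 2) / (t + u) ^ 2 := by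
      rw [le_div_iff₀ (by positivity), mul_comm, ← hYsq]; exact hmarkov
    _ = V / (V + t ^ 2) := by
      simp only [u]
      field_simp
      ring

lemma sq_div_variance_add_sq_le_measureReal_lt [IsProbabilityMeasure P] {X : Ω → ℝ}
    (hX : MemLp X 2 P) {t : ℝ} (ht : 0 < t) :
    t ^ 2 / (Var[X; P] + t ^ 2) ≤ P.real {ω | X ω < P[X] + t} := by
  have hcompl : {ω | X ω < P[X] + t}ᶜ = {ω | P[X] + t ≤ X ω} := by ext; simp
  have hunion := measureReal_union_le (μ := P) {ω | X ω < P[X] + t} {ω | X ω < P[X] + t}ᶜ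
  rw [Set.union_compl_self, probReal_univ, hcompl] at hunion
  have hpos : 0 < Var[X; P] + t ^ 2 := by have := variance_nonneg X P; positivity
  have hsplit : t ^ 2 / (Var[X; P] + t ^ 2) = 1 - Var[X; P] / (Var[X; P] + t ^ 2) := by
    field_simp; ring
  linarith [measureReal_ge_integral_add_le hX ht]

lemma inv_one_add_div_sq_lt_measureReal_lt [IsProbabilityMeasure P] {X : Ω → ℝ}
    (hX : MemLp X 2 P) {B d r : ℝ} (hd : 0 < d) (hdr : d < r - P[X]) (hVB : Var[X; P] < B) :
    (1 + B / d ^ 2)⁻¹ < P.real {ω | X ω < r} := by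
  have hr : r = P[X] + (r - P[X]) := by ring
  rw [hr]
  exact (inv_one_add_div_sq_lt_sq_div_add_sq hd hdr (variance_nonneg X P) hVB).trans_le
    (sq_div_variance_add_sq_le_measureReal_lt hX (hd.trans hdr))

lemma integral_sq_of_hasLaw_gaussianReal {X : Ω → ℝ} (hX : HasLaw X (gaussianReal μ v) P) :
    ∫ ω, X ω ^ 2 ∂P = μ ^ 2 + v :=
  (hX.integral_comp (f := fun x ↦ x ^ 2) (by fun_prop)).trans integral_sq_gaussianReal

lemma memLp_sq_of_hasLaw_gaussianReal {X : Ω → ℝ} (hX : HasLaw X (gaussianReal μ v) P) :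
    MemLp (fun ω ↦ X ω ^ 2) 2 P := by
  have h := memLp_sq_gaussianReal (μ := μ) (v := v)
  rw [← hX.map_eq, memLp_map_measure_iff (by fun_prop) hX.aemeasurable] at h
  exact h

lemma variance_sq_of_hasLaw_gaussianReal {X : Ω → ℝ} (hX : HasLaw X (gaussianReal μ v) P) :
    Var[fun ω ↦ X ω ^ 2; P] = 4 * μ ^ 2 * v + 2 * v ^ 2 := by
  rw [← variance_sq_gaussianReal, ← hX.map_eq, variance_map (by fun_prop) hX.aemeasurable]
  rfl

lemma gaussianReal_sub_gaussianReal_of_indepFun {U V : Ω → ℝ} {μ₁ μ₂ : ℝ} {v₁ v₂ : ℝ≥0}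
    (hU : HasLaw U (gaussianReal μ₁ v₁) P) (hV : HasLaw V (gaussianReal μ₂ v₂) P)
    (hUV : U ⟂ᵢ[P] V) : HasLaw (U - V) (gaussianReal (μ₁ - μ₂) (v₁ + v₂)) P := by
  rw [sub_eq_add_neg, sub_eq_add_neg, ← gaussianReal_conv_gaussianReal]
  exact (hUV.comp measurable_id measurable_neg).hasLaw_add hU (gaussianReal_neg hV)

lemma hasLaw_const_add_mul_sub_of_indepFun {U V : Ω → ℝ} (hU : HasLaw U (gaussianReal 0 1) P)
    (hV : HasLaw V (gaussianReal 0 1) P) (hUV : U ⟂ᵢ[P] V) (p σ : ℝ) :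
    HasLaw (fun ω ↦ p + σ * (U ω - V ω)) (gaussianReal p (.mk (σ ^ 2) (sq_nonneg σ) * 2)) P := by
  simpa [one_add_one_eq_two] using
    gaussianReal_const_add (gaussianReal_const_mul (gaussianReal_sub_gaussianReal_of_indepFun
      hU hV hUV) σ) p

lemma iIndepFun.pairwise_indepFun_comp_sumElim {ι β γ : Type*} {mβ : MeasurableSpace β}
    {mγ : MeasurableSpace γ} {ξ ξ' : ι → Ω → β} (h : iIndepFun (Sum.elim ξ ξ') P)
    (hm : ∀ i, AEMeasurable (Sum.elim ξ ξ' i) P) {f : ι → β × β → γ}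
    (hf : ∀ i, Measurable (f i)) :
    Pairwise fun i j ↦ (fun ω ↦ f i (ξ i ω, ξ' i ω)) ⟂ᵢ[P] (fun ω ↦ f j (ξ j ω, ξ' j ω)) :=
  fun i j hij ↦ (h.indepFun_prodMk_prodMk₀ hm (.inl i) (.inr i) (.inl j) (.inr j)
    (by simpa using hij) Sum.inl_ne_inr Sum.inr_ne_inl (by simpa using hij)).comp (hf i) (hf j)

section SumOfSquares

variable {ι : Type*} [Fintype ι] {X : ι → Ω → ℝ} {m : ι → ℝ}

lemma integral_sum_sq_of_hasLaw_gaussianReal [IsFiniteMeasure P]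
    (hX : ∀ i, HasLaw (X i) (gaussianReal (m i) v) P) :
    ∫ ω, ∑ i, X i ω ^ 2 ∂P = ∑ i, m i ^ 2 + Fintype.card ι * v := by
  rw [integral_finsetSum _ fun i _ ↦ ((memLp_sq_of_hasLaw_gaussianReal (hX i)).integrable
    one_le_two)]
  simp [integral_sq_of_hasLaw_gaussianReal (hX _), Finset.sum_add_distrib]

lemma variance_sum_sq_of_hasLaw_gaussianReal
    (hX : ∀ i, HasLaw (X i) (gaussianReal (m i) v) P)
    (hind : Pairwise fun i j ↦ X i ⟂ᵢ[P] X j) :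
    Var[fun ω ↦ ∑ i, X i ω ^ 2; P] = 4 * v * ∑ i, m i ^ 2 + 2 * Fintype.card ι * v ^ 2 := by
  have hsum : (fun ω ↦ ∑ i, X i ω ^ 2) = ∑ i, fun ω ↦ X i ω ^ 2 := by ext; simp
  rw [hsum, IndepFun.variance_sum (fun i _ ↦ memLp_sq_of_hasLaw_gaussianReal (hX i))
    fun i _ j _ hij ↦ (hind hij).comp (measurable_id.pow_const 2) (measurable_id.pow_const 2)]
  simp only [variance_sq_of_hasLaw_gaussianReal (hX _), Finset.sum_add_distrib, Finset.mul_sum,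
    Finset.sum_const, Finset.card_univ, nsmul_eq_mul]
  congr 1
  · exact Finset.sum_congr rfl fun i _ ↦ by ring
  · ring

end SumOfSquares

end ProbabilityTheory

/-- For P ∈ ℝ^{q²} with ‖P‖ < ε, σ > 0 with σq < ε, and independent
i.i.d. standard Gaussian noise vectors ξ, ξ',
Pr(‖P + σ(ξ − ξ')‖ < 2ε) > (1 + 8σ²(ε² + σ²q²)/(3ε² − 2σ²q²)²)⁻¹. -/
theorem RID_close_neighbors_bound
    {Ω : Type*} [MeasureSpace Ω] [IsProbabilityMeasure (ℙ : Measure Ω)]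
    (q : ℕ) (σ ε : ℝ) (hσ : 0 < σ) (hε : 0 < ε)
    (P : Fin (q ^ 2) → ℝ) (ξ ξ' : Fin (q ^ 2) → Ω → ℝ)
    (hgauss : ∀ i : Fin (q ^ 2) ⊕ Fin (q ^ 2),
      Measure.map (Sum.elim ξ ξ' i) ℙ = gaussianReal 0 1)
    (hind : iIndepFun (Sum.elim ξ ξ') ℙ)
    (hP : Real.sqrt (∑ a, (P a) ^ 2) < ε)
    (hσq : σ * (q : ℝ) < ε) :
    (1 + 8 * σ ^ 2 * (ε ^ 2 + σ ^ 2 * (q : ℝ) ^ 2)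
        / (3 * ε ^ 2 - 2 * σ ^ 2 * (q : ℝ) ^ 2) ^ 2)⁻¹
      < (ℙ {ω | Real.sqrt (∑ a, (P a + σ * (ξ a ω - ξ' a ω)) ^ 2) < 2 * ε}).toReal := by
  have hξ (i) : HasLaw (Sum.elim ξ ξ' i) (gaussianReal 0 1) ℙ :=
    ⟨.of_map_ne_zero (by rw [hgauss]; exact IsProbabilityMeasure.ne_zero _), hgauss i⟩
  set X : Fin (q ^ 2) → Ω → ℝ := fun a ω ↦ P a + σ * (ξ a ω - ξ' a ω)
  have hX (a) : HasLaw (X a) (gaussianReal (P a) (.mk (σ ^ 2) (sq_nonneg σ) * 2)) ℙ :=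
    hasLaw_const_add_mul_sub_of_indepFun (hξ (.inl a)) (hξ (.inr a))
      (hind.indepFun Sum.inl_ne_inr) (P a) σ
  have hXind : Pairwise fun a b ↦ X a ⟂ᵢ[ℙ] X b :=
    hind.pairwise_indepFun_comp_sumElim (fun i ↦ (hξ i).aemeasurable)
      (f := fun a r ↦ P a + σ * (r.1 - r.2)) fun a ↦ by fun_prop
  set S := fun ω ↦ ∑ a, X a ω ^ 2
  have hS : MemLp S 2 ℙ := memLp_finsetSum _ fun a _ ↦ memLp_sq_of_hasLaw_gaussianReal (hX a)
  have hmean : ℙ[S] = ∑ a, P a ^ 2 + 2 * σ ^ 2 * q ^ 2 := by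
    rw [integral_sum_sq_of_hasLaw_gaussianReal hX]
    simp only [Fintype.card_fin, Nat.cast_pow, NNReal.coe_mul, NNReal.coe_mk, NNReal.coe_ofNat]
    ring
  have hvar : Var[S; ℙ] = 8 * σ ^ 2 * ∑ a, P a ^ 2 + 8 * σ ^ 4 * q ^ 2 := by
    rw [variance_sum_sq_of_hasLaw_gaussianReal hX hXind]
    simp only [Fintype.card_fin, Nat.cast_pow, NNReal.coe_mul, NNReal.coe_mk, NNReal.coe_ofNat]
    ring
  have hevent : {ω | √(∑ a, (P a + σ * (ξ a ω - ξ' a ω)) ^ 2) < 2 * ε}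
      = {ω | S ω < (2 * ε) ^ 2} := by
    ext ω
    exact Real.sqrt_lt' (by positivity)
  have hPε : ∑ a, P a ^ 2 < ε ^ 2 := (Real.sqrt_lt' hε).1 hP
  have hσqε : σ ^ 2 * q ^ 2 < ε ^ 2 := by
    rw [← mul_pow]; exact pow_lt_pow_left₀ hσq (by positivity) two_ne_zero
  have hσPε : σ ^ 2 * ∑ a, P a ^ 2 < σ ^ 2 * ε ^ 2 := by gcongr
  rw [← measureReal_def, hevent]
  exact inv_one_add_div_sq_lt_measureReal_lt hS (by nlinarith) (by linarith) (by linarith)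
end

section
/- Let L^{(n)} and L^{(c)} be two vector fields (gradients of smoothed noisy and clean patches) at a point x such that E[‖∇L^{(n)}(x) − ∇L^{(c)}(x)‖²] = σ²/(4π) and Var(‖∇L^{(n)}(x) − ∇L^{(c)}(x)‖²) = (σ⁴/(16π²))(1 + 27/(16π)). Then for every k > 0, Pr( |‖∇L^{(n)}(x)‖ − ‖∇L^{(c)}(x)‖| < σ √((1 + 1.25k)/(4π)) ) > 1 − 1/(1 + k²). -/
/-!
Write `m = σ²/(4π)` and `X = ‖∇L⁽ⁿ⁾(x) − ∇L⁽ᶜ⁾(x)‖²`. Cantelli's inequality with deviation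
`a = 1.25 k m` gives `Pr(X < m + a) ≥ 1 − Var X / (Var X + a²)`, and since
`Var X = m² (1 + 27/(16π)) < (1.25 m)²` this exceeds `1 − 1/(1 + k²)`. On the event
`X < m + a = σ² (1 + 1.25 k)/(4π)` the reverse triangle inequality bounds
`|‖∇L⁽ⁿ⁾(x)‖ − ‖∇L⁽ᶜ⁾(x)‖|` by `√X < σ √((1 + 1.25 k)/(4π))`.
-/

open MeasureTheory ProbabilityTheory Real

namespace ProbabilityTheory

variable {Ω : Type*} [MeasurableSpace Ω] {μ : Measure Ω} [IsProbabilityMeasure μ] {X : Ω → ℝ}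

lemma integral_sq_sub_add_const (hX : MemLp X 2 μ) (t : ℝ) :
    ∫ ω, (X ω - μ[X] + t) ^ 2 ∂μ = Var[X; μ] + t ^ 2 := by
  have hY : MemLp (fun ω ↦ X ω - μ[X] + t) 2 μ := (hX.sub (memLp_const _)).add (memLp_const _)
  have hmean : ∫ ω, (X ω - μ[X] + t) ∂μ = t := by
    have hXi : Integrable X μ := hX.integrable one_le_two
    rw [integral_add (f := fun ω ↦ X ω - μ[X]) (hXi.sub (integrable_const _))
      (integrable_const t), integral_sub hXi (integrable_const _)]
    simp
  have hvar : Var[fun ω ↦ X ω - μ[X] + t; μ] = Var[X; μ] := by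
    rw [variance_add_const (X := fun ω ↦ X ω - μ[X]) (hX.1.sub aestronglyMeasurable_const),
      variance_sub_const hX.1]
  have := variance_eq_sub hY
  simp only [Pi.pow_apply] at this
  rw [hvar, hmean] at this
  linarith

/-- **Cantelli's inequality**. -/
theorem measureReal_ge_le_variance_div_variance_add_sq (hX : MemLp X 2 μ) {a : ℝ} (ha : 0 < a) :
    μ.real {ω | μ[X] + a ≤ X ω} ≤ Var[X; μ] / (Var[X; μ] + a ^ 2) := by
  set v := Var[X; μ]
  have hv : 0 ≤ v := variance_nonneg X μ
  -- Markov's inequality for `(X - μ[X] + t)²`, with the optimal shift `t = v / a`.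
  set t := v / a
  have hat : 0 < a + t := by positivity
  have hsub : {ω | μ[X] + a ≤ X ω} ⊆ {ω | (a + t) ^ 2 ≤ (X ω - μ[X] + t) ^ 2} := fun ω hω ↦
    pow_le_pow_left₀ hat.le (by linarith [show μ[X] + a ≤ X ω from hω]) 2
  have hmarkov := mul_meas_ge_le_integral_of_nonneg
    (ae_of_all μ fun ω ↦ sq_nonneg (X ω - μ[X] + t))
    ((hX.sub (memLp_const _)).add (memLp_const t)).integrable_sq ((a + t) ^ 2)
  rw [integral_sq_sub_add_const hX] at hmarkov
  calc μ.real {ω | μ[X] + a ≤ X ω} ≤ (v + t ^ 2) / (a + t) ^ 2 := by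
        rw [le_div_iff₀ (by positivity), mul_comm]
        exact (mul_le_mul_of_nonneg_left (measureReal_mono hsub) (by positivity)).trans hmarkov
    _ = v / (v + a ^ 2) := by
        simp only [t]
        field_simp
        ring

theorem one_sub_variance_div_le_measureReal_lt (hX : MemLp X 2 μ) {a : ℝ} (ha : 0 < a) :
    1 - Var[X; μ] / (Var[X; μ] + a ^ 2) ≤ μ.real {ω | X ω < μ[X] + a} := by
  have hcover : {ω | X ω < μ[X] + a} ∪ {ω | μ[X] + a ≤ X ω} = Set.univ := by
    ext ω; simp [lt_or_ge]
  have := measureReal_union_le (μ := μ) {ω | X ω < μ[X] + a} {ω | μ[X] + a ≤ X ω}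
  rw [hcover, probReal_univ] at this
  linarith [measureReal_ge_le_variance_div_variance_add_sq hX ha]

end ProbabilityTheory

lemma div_add_sq_lt_one_div_one_add_sq {v a k : ℝ} (hv : 0 ≤ v) (h : v * k ^ 2 < a ^ 2) :
    v / (v + a ^ 2) < 1 / (1 + k ^ 2) := by
  rw [div_lt_div_iff₀ (by nlinarith [sq_nonneg k]) (by positivity)]
  linarith

lemma one_add_27_div_16_pi_lt : 1 + 27 / (16 * π) < 1.25 ^ 2 := by
  have : 27 / (16 * π) < 27 / (16 * 3) := by gcongr; exact pi_gt_three
  norm_num at this ⊢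
  linarith

lemma abs_norm_sub_norm_lt_of_sq_lt {E : Type*} [SeminormedAddCommGroup E] {u v : E} {T : ℝ}
    (hT : 0 ≤ T) (h : ‖u - v‖ ^ 2 < T ^ 2) : |‖u‖ - ‖v‖| < T :=
  (abs_norm_sub_norm_le u v).trans_lt (pow_lt_pow_iff_left₀ (norm_nonneg _) hT two_ne_zero |>.mp h)

/-- Corollary 4.7: if the gradient perturbation ∇L⁽ⁿ⁾(x) − ∇L⁽ᶜ⁾(x)
has E[‖·‖²] = σ²/(4π) and Var(‖·‖²) = (σ⁴/(16π²))(1 + 27/(16π)), then for every k > 0,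
Pr(|‖∇L⁽ⁿ⁾(x)‖ − ‖∇L⁽ᶜ⁾(x)‖| < σ√((1 + 1.25k)/(4π))) > 1 − 1/(1 + k²). -/
theorem gradient_magnitude_robustness
    {Ω : Type*} [MeasureSpace Ω] [IsProbabilityMeasure (ℙ : Measure Ω)]
    (σ : ℝ) (hσ : 0 < σ)
    (Dn : Ω → EuclideanSpace ℝ (Fin 2)) (Dc : EuclideanSpace ℝ (Fin 2))
    (hmean : ∫ ω, ‖Dn ω - Dc‖ ^ 2 ∂ℙ = σ ^ 2 / (4 * π))
    (hvar : variance (fun ω => ‖Dn ω - Dc‖ ^ 2) ℙ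
      = σ ^ 4 / (16 * π ^ 2) * (1 + 27 / (16 * π))) :
    ∀ k : ℝ, 0 < k →
      1 - 1 / (1 + k ^ 2)
        < (ℙ {ω | |‖Dn ω‖ - ‖Dc‖| < σ * Real.sqrt ((1 + 1.25 * k) / (4 * π))}).toReal := by
  intro k hk
  set m := σ ^ 2 / (4 * π)
  have hm : 0 < m := by positivity
  have hint : Integrable (fun ω ↦ ‖Dn ω - Dc‖ ^ 2) ℙ := by
    by_contra h
    rw [integral_undef h] at hmean
    exact hm.ne hmean
  have hL2 : MemLp (fun ω ↦ ‖Dn ω - Dc‖ ^ 2) 2 ℙ :=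
    memLp_two_of_variance_ne_zero hint.1 (by rw [hvar]; positivity)
  have hvar' : Var[fun ω ↦ ‖Dn ω - Dc‖ ^ 2; ℙ] = m ^ 2 * (1 + 27 / (16 * π)) := by
    rw [hvar]; simp only [m]; field_simp; ring
  have hthreshold : (σ * √((1 + 1.25 * k) / (4 * π))) ^ 2 = m + 1.25 * k * m := by
    rw [mul_pow, sq_sqrt (by positivity)]; simp only [m]; field_simp
  have hcantelli := one_sub_variance_div_le_measureReal_lt hL2 (a := 1.25 * k * m) (by positivity)
  rw [hmean, hvar'] at hcantelli
  have hratio : m ^ 2 * (1 + 27 / (16 * π)) / (m ^ 2 * (1 + 27 / (16 * π)) + (1.25 * k * m) ^ 2)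
      < 1 / (1 + k ^ 2) := by
    refine div_add_sq_lt_one_div_one_add_sq (by positivity) ?_
    have := mul_lt_mul_of_pos_right one_add_27_div_16_pi_lt (show 0 < m ^ 2 * k ^ 2 by positivity)
    linarith
  have hsub : {ω | ‖Dn ω - Dc‖ ^ 2 < m + 1.25 * k * m}
      ⊆ {ω | |‖Dn ω‖ - ‖Dc‖| < σ * √((1 + 1.25 * k) / (4 * π))} := fun ω hω ↦
    abs_norm_sub_norm_lt_of_sq_lt (by positivity) (hthreshold ▸ hω)
  show _ < (ℙ : Measure Ω).real _
  linarith [measureReal_mono (μ := ℙ) hsub]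
end
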